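/- arXiv:1411.3065 — 7 statements merged into one kernel-verified Lean document; each statement's English description precedes it below -/
import Mathlib

section
/- Define polynomials Δ_{i,j} ∈ ℚ[x_1,…,x_n,t] for n ≥ i ≥ j ≥ 1 by: Δ_{i,i} := x_i − i·t for 1 ≤ i ≤ n, and for i > j, Δ_{i,j} := (Σ_{ℓ=1}^{j} Δ_{i−j+ℓ−1, ℓ})·(x_j − x_i − t). Then for every pair (i,j) with n ≥ i ≥ j ≥ 1 one has f_{i,j} = Σ_{k=1}^{j} Δ_{i−j+k, k}. -/
/-!
Induct on `i`. On the diagonal `f_{j,j} = p_j` is literally `∑_{k ≤ j} Δ_{k,k}`. Off the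
diagonal, the recursion for `Δ_{i+1,j+1}` sums over exactly the terms that the induction
hypothesis collects into `f_{i,j+1}`, so `Δ_{i+1,j+1} = (x_{j+1} - x_{i+1} - t) f_{i,j+1}`;
adding it to `f_{i,j} = ∑_{k ≤ j} Δ_{i-j+k,k}` gives the recursion for `f_{i+1,j+1}`.
-/

open MvPolynomial Finset

/-- The variable `t` in `ℚ[x_1,…,x_n,t]`, realized as `MvPolynomial (Option (Fin n)) ℚ`
with `t = X none`. -/
noncomputable def tv (n : ℕ) : MvPolynomial (Option (Fin n)) ℚ := X none

/-- The variable `x_k` (for `1 ≤ k ≤ n`) in `ℚ[x_1,…,x_n,t]`. -/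
noncomputable def xv (n : ℕ) (k : ℕ) : MvPolynomial (Option (Fin n)) ℚ :=
  if h : k - 1 < n then X (some ⟨k - 1, h⟩) else 0

/-- `p_i = ∑_{k=1}^i (x_k - k t)`, with `p_0 = 0`. -/
noncomputable def pp (n : ℕ) (i : ℕ) : MvPolynomial (Option (Fin n)) ℚ :=
  ∑ k ∈ Finset.range i, (xv n (k + 1) - C ((k : ℚ) + 1) * tv n)

/-- The polynomials `f_{i,j}`: `f_{i,0} = 0`, `f_{j,j} = p_j`, and
`f_{i,j} = f_{i-1,j-1} + (x_j - x_i - t) f_{i-1,j}` for `i > j ≥ 1`. -/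
noncomputable def ff (n : ℕ) : ℕ → ℕ → MvPolynomial (Option (Fin n)) ℚ
  | _, 0 => 0
  | 0, _ + 1 => 0
  | i + 1, j + 1 =>
      if i = j then pp n (j + 1)
      else ff n i j + (xv n (j + 1) - xv n (i + 1) - tv n) * ff n i (j + 1)

section

variable {n : ℕ}

theorem ff_zero_right (i : ℕ) : ff n i 0 = 0 := by
  cases i <;> rfl

theorem ff_self (j : ℕ) : ff n j j = pp n j := by
  cases j <;> simp [ff, pp]

theorem ff_succ_succ_of_lt {i j : ℕ} (h : j < i) :
    ff n (i + 1) (j + 1) = ff n i j + (xv n (j + 1) - xv n (i + 1) - tv n) * ff n i (j + 1) := by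
  simp [ff, h.ne']

section Delta

variable {D : ℕ → ℕ → MvPolynomial (Option (Fin n)) ℚ}

theorem pp_eq_sum_diag (hdiag : ∀ i : ℕ, 1 ≤ i → i ≤ n → D i i = xv n i - C (i : ℚ) * tv n)
    {j : ℕ} (hj : j ≤ n) : pp n j = ∑ k ∈ range j, D (k + 1) (k + 1) := by
  refine sum_congr rfl fun k hk => ?_
  rw [hdiag (k + 1) (by omega) (by have := mem_range.mp hk; omega)]
  push_cast
  rfl

theorem ff_eq_sum (hdiag : ∀ i : ℕ, 1 ≤ i → i ≤ n → D i i = xv n i - C (i : ℚ) * tv n)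
    (hrec : ∀ i j : ℕ, 1 ≤ j → j < i → i ≤ n →
      D i j = (∑ l ∈ range j, D (i - j + l) (l + 1)) * (xv n j - xv n i - tv n))
    {i j : ℕ} (hji : j ≤ i) (hin : i ≤ n) :
    ff n i j = ∑ k ∈ range j, D (i - j + k + 1) (k + 1) := by
  induction i generalizing j with
  | zero =>
    obtain rfl : j = 0 := by omega
    simp [ff_zero_right]
  | succ i ih =>
    obtain _ | j := j
    · simp [ff_zero_right]
    rcases (Nat.succ_le_succ_iff.mp hji).eq_or_lt with rfl | hlt
    · simp [ff_self, pp_eq_sum_diag hdiag hin]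
    have hD : D (i + 1) (j + 1) = (xv n (j + 1) - xv n (i + 1) - tv n) * ff n i (j + 1) := by
      rw [hrec (i + 1) (j + 1) (by omega) (by omega) hin, ih hlt (by omega), mul_comm]
      exact congrArg _ (sum_congr rfl fun l _ => by congr 1; omega)
    rw [ff_succ_succ_of_lt hlt, sum_range_succ, Nat.add_sub_add_right, ih hlt.le (by omega),
      Nat.sub_add_cancel hlt.le, hD]

end Delta

end

/-- Define `Δ_{i,i} = x_i - i t` and, for `i > j`,
`Δ_{i,j} = (∑_{ℓ=1}^{j} Δ_{i-j+ℓ-1, ℓ}) (x_j - x_i - t)`.  Then for `n ≥ i ≥ j ≥ 1`,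
`f_{i,j} = ∑_{k=1}^{j} Δ_{i-j+k, k}`.
(The function `D` below carries the values `Δ_{i,j}`; the two hypotheses are exactly the
defining recursion, and they determine `D` on the domain `1 ≤ j ≤ i ≤ n`.  In the sums,
the summation index runs over `ℓ = ℓ'+1` and `k = k'+1` with `ℓ', k' ∈ range j`.) -/
theorem stmt2 (n : ℕ) (D : ℕ → ℕ → MvPolynomial (Option (Fin n)) ℚ)
    (hdiag : ∀ i : ℕ, 1 ≤ i → i ≤ n → D i i = xv n i - C (i : ℚ) * tv n)
    (hrec : ∀ i j : ℕ, 1 ≤ j → j < i → i ≤ n →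
      D i j = (∑ l ∈ Finset.range j, D (i - j + l) (l + 1)) * (xv n j - xv n i - tv n)) :
    ∀ i j : ℕ, 1 ≤ j → j ≤ i → i ≤ n →
      ff n i j = ∑ k ∈ Finset.range j, D (i - j + k + 1) (k + 1) :=
  fun _ _ _ hji hin => ff_eq_sum hdiag hrec hji hin
end

section
/- For every pair (i,j) with n ≥ i ≥ j ≥ 1, the polynomial obtained from f_{i,j} by substituting t = 0 equals Σ_{k=1}^{j} x_k · ∏_{ℓ=j+1}^{i} (x_k − x_ℓ) in ℚ[x_1,…,x_n], where for i = j the empty product ∏_{ℓ=j+1}^{i} (x_k − x_ℓ) is taken to be 1. -/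
open MvPolynomial Finset

/-- The variable `x_k` (for `1 ≤ k ≤ n`) in `ℚ[x_1,…,x_n]`. -/
noncomputable def xq (n : ℕ) (k : ℕ) : MvPolynomial (Fin n) ℚ :=
  if h : k - 1 < n then X (⟨k - 1, h⟩ : Fin n) else 0

/-- The specialization `ℚ[x_1,…,x_n,t] → ℚ[x_1,…,x_n]` at `t = 0`, `x_i ↦ x_i`. -/
noncomputable def specialize (n : ℕ) :
    MvPolynomial (Option (Fin n)) ℚ →ₐ[ℚ] MvPolynomial (Fin n) ℚ :=
  MvPolynomial.aeval (fun v => Option.elim v 0 (fun i => X i))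

/-! Both sides satisfy the recursion defining `f_{i,j}` once `t = 0`: for the closed form
`∑_{k ≤ j} x_k ∏_{j < l ≤ i} (x_k - x_l)` this rests on the telescoping
`(x_k - x_{j+1}) + (x_{j+1} - x_{i+1}) = x_k - x_{i+1}`, the new summand `k = j + 1`
coming from the second term alone. -/

section ClosedForm

variable {R : Type*} [CommRing R] (x : ℕ → R)

def closedForm (i j : ℕ) : R :=
  ∑ k ∈ Icc 1 j, x k * ∏ l ∈ Icc (j + 1) i, (x k - x l)

theorem closedForm_self (j : ℕ) : closedForm x j j = ∑ k ∈ Icc 1 j, x k := by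
  simp [closedForm]

theorem closedForm_succ_succ {i j : ℕ} (h : j < i) :
    closedForm x (i + 1) (j + 1) =
      closedForm x i j + (x (j + 1) - x (i + 1)) * closedForm x i (j + 1) := by
  have prod_bot : ∀ k, ∏ l ∈ Icc (j + 1) i, (x k - x l) =
      (x k - x (j + 1)) * ∏ l ∈ Icc (j + 2) i, (x k - x l) := fun k => by
    rw [← Ico_add_one_right_eq_Icc, ← Ico_add_one_right_eq_Icc,
      prod_eq_prod_Ico_succ_bot (by omega)]
  have prod_top : ∀ k, ∏ l ∈ Icc (j + 2) (i + 1), (x k - x l) =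
      (∏ l ∈ Icc (j + 2) i, (x k - x l)) * (x k - x (i + 1)) :=
    fun k => prod_Icc_succ_top (by omega) _
  simp only [closedForm, prod_bot, prod_top]
  rw [sum_Icc_succ_top (by omega : 1 ≤ j + 1), sum_Icc_succ_top (by omega : 1 ≤ j + 1),
    mul_add, mul_sum, ← add_assoc, ← sum_add_distrib]
  congr 1
  · exact sum_congr rfl fun k _ => by ring
  · ring

end ClosedForm

theorem specialize_tv (n : ℕ) : specialize n (tv n) = 0 := by
  simp [specialize, tv]

theorem specialize_xv (n k : ℕ) : specialize n (xv n k) = xq n k := by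
  unfold xv xq
  split
  · simp [specialize]
  · exact map_zero _

theorem specialize_pp (n i : ℕ) : specialize n (pp n i) = ∑ k ∈ Icc 1 i, xq n k := by
  rw [pp, map_sum, ← Ico_add_one_right_eq_Icc, sum_Ico_eq_sum_range, Nat.add_sub_cancel]
  refine sum_congr rfl fun k _ => ?_
  rw [map_sub, map_mul, specialize_tv, specialize_xv, mul_zero, sub_zero, Nat.add_comm 1 k]

theorem specialize_ff (n : ℕ) {i j : ℕ} (h : j ≤ i) :
    specialize n (ff n i j) = closedForm (xq n) i j := by
  induction i generalizing j with
  | zero => simp [Nat.le_zero.mp h, ff, closedForm]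
  | succ i ih =>
    match j with
    | 0 => simp [ff, closedForm]
    | j + 1 =>
      rw [ff]
      by_cases hij : i = j
      · rw [if_pos hij, specialize_pp, hij, closedForm_self]
      · rw [if_neg hij, map_add, map_mul, map_sub, map_sub, specialize_xv, specialize_xv,
          specialize_tv, sub_zero, ih (by omega), ih (by omega),
          closedForm_succ_succ _ (by omega)]

theorem stmt3_general (n : ℕ) (i j : ℕ) (h2 : j ≤ i) :
    specialize n (ff n i j) =
      ∑ k ∈ Finset.Icc 1 j, xq n k * ∏ l ∈ Finset.Icc (j + 1) i, (xq n k - xq n l) :=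
  specialize_ff n h2

/-- For `n ≥ i ≥ j ≥ 1`, the specialization of `f_{i,j}` at `t = 0` equals
`∑_{k=1}^{j} x_k ∏_{ℓ=j+1}^{i} (x_k - x_ℓ)` (with the empty product equal to `1`
when `i = j`). -/
theorem stmt3 (n : ℕ) (i j : ℕ) (h1 : 1 ≤ j) (h2 : j ≤ i) (h3 : i ≤ n) :
    specialize n (ff n i j) =
      ∑ k ∈ Finset.Icc 1 j, xq n k * ∏ l ∈ Finset.Icc (j + 1) i, (xq n k - xq n l) :=
  stmt3_general n i j h2
end

section
/- For every integer r with 1 ≤ r ≤ n, one has the identity q_r(x) = Σ_{i=0}^{r−1} (−1)^i · e_i(x_{n+2−r},…,x_n) · 𝗉_{r−i}(x_1,…,x_n) in ℚ[x_1,…,x_n], where q_r(x) := Σ_{k=1}^{n+1−r} x_k · ∏_{ℓ=n+2−r}^{n} (x_k − x_ℓ) (empty product equal to 1 when r = 1), e_i denotes the degree-i elementary symmetric polynomial in the r−1 variables x_{n+2−r},…,x_n (with e_0 = 1), and 𝗉_m(x_1,…,x_n) := Σ_{k=1}^{n} x_k^m denotes the m-th power sum. -/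
open MvPolynomial Finset

/-- `q_r = ∑_{k=1}^{n+1-r} x_k ∏_{ℓ=n+2-r}^{n} (x_k - x_ℓ)` (empty product is `1` when
`r = 1`). -/
noncomputable def qpoly (n : ℕ) (r : ℕ) : MvPolynomial (Fin n) ℚ :=
  ∑ k ∈ Finset.Icc 1 (n + 1 - r),
    xq n k * ∏ l ∈ Finset.Icc (n + 2 - r) n, (xq n k - xq n l)

/-- The degree-`i` elementary symmetric polynomial in the variables `x_{n+2-r}, …, x_n`
(so `e_0 = 1`). -/
noncomputable def esymmTail (n : ℕ) (r : ℕ) (i : ℕ) : MvPolynomial (Fin n) ℚ :=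
  ∑ A ∈ Finset.powersetCard i (Finset.Icc (n + 2 - r) n), ∏ l ∈ A, xq n l

/-- The `m`-th power sum `𝗉_m = ∑_{k=1}^{n} x_k^m`. -/
noncomputable def powsum (n : ℕ) (m : ℕ) : MvPolynomial (Fin n) ℚ :=
  ∑ k ∈ Finset.Icc 1 n, xq n k ^ m

/-! For `k > n + 1 - r` the variable `x_k` is a root of `∏_{ℓ=n+2-r}^{n} (x - x_ℓ)`, so the sum
defining `q_r` may be extended to all `k ≤ n`. Expanding each product by Vieta's formula and
exchanging the two sums turns `∑_k x_k^{r-i}` into power sums. -/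

theorem Finset.prod_sub_eq_sum_powersetCard {R ι : Type*} [CommRing R] (s : Finset ι)
    (f : ι → R) (p : R) :
    ∏ l ∈ s, (p - f l) =
      ∑ j ∈ range (#s + 1), (-1) ^ j * (∑ t ∈ s.powersetCard j, ∏ l ∈ t, f l) * p ^ (#s - j) := by
  simpa [Polynomial.eval_prod, Polynomial.eval_finsetSum, Finset.esymm_map_val, mul_assoc] using
    congrArg (Polynomial.eval p) (Multiset.prod_X_sub_X_eq_sum_esymm (s.val.map f))

lemma card_Icc_tail {n r : ℕ} (h1 : 1 ≤ r) (h2 : r ≤ n + 1) : #(Icc (n + 2 - r) n) = r - 1 := by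
  rw [Nat.card_Icc]; omega

lemma qpoly_eq_sum_Icc {n r : ℕ} (h1 : 1 ≤ r) :
    qpoly n r = ∑ k ∈ Icc 1 n, xq n k * ∏ l ∈ Icc (n + 2 - r) n, (xq n k - xq n l) := by
  refine sum_subset (Icc_subset_Icc_right (by omega)) fun k hk hk' => ?_
  simp only [mem_Icc, not_and, not_le] at hk hk'
  exact mul_eq_zero_of_right _ (prod_eq_zero (mem_Icc.2 ⟨by omega, hk.2⟩) (sub_self _))

lemma xq_mul_prod_sub_eq_sum {n r : ℕ} (h1 : 1 ≤ r) (h2 : r ≤ n + 1) (k : ℕ) :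
    xq n k * ∏ l ∈ Icc (n + 2 - r) n, (xq n k - xq n l) =
      ∑ i ∈ range r, (-1) ^ i * esymmTail n r i * xq n k ^ (r - i) := by
  rw [prod_sub_eq_sum_powersetCard, card_Icc_tail h1 h2, Nat.sub_add_cancel h1, mul_sum]
  refine sum_congr rfl fun i hi => ?_
  rw [esymmTail, show r - i = r - 1 - i + 1 by grind, pow_succ]
  ring

/-- For `1 ≤ r ≤ n`,
`q_r = ∑_{i=0}^{r-1} (-1)^i e_i(x_{n+2-r},…,x_n) 𝗉_{r-i}(x_1,…,x_n)`. -/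
theorem stmt8 (n : ℕ) (r : ℕ) (h1 : 1 ≤ r) (h2 : r ≤ n) :
    qpoly n r = ∑ i ∈ Finset.range r, (-1) ^ i * esymmTail n r i * powsum n (r - i) := by
  rw [qpoly_eq_sum_Icc h1, sum_congr rfl fun k _ => xq_mul_prod_sub_eq_sum h1 (by omega) k,
    sum_comm]
  simp only [powsum, mul_sum]
end

section
/- In ℚ[x_1,…,x_n], the following three ideals coincide: (1) the ideal generated by q_1,…,q_n, where q_r := Σ_{k=1}^{n+1−r} x_k · ∏_{ℓ=n+2−r}^{n} (x_k − x_ℓ); (2) the ideal generated by the power sums 𝗉_1,…,𝗉_n, where 𝗉_m := Σ_{k=1}^{n} x_k^m; and (3) the ideal generated by the elementary symmetric polynomials e_1(x_1,…,x_n),…,e_n(x_1,…,x_n). -/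
/-!
Expanding the product over subsets gives `q_r = 𝗉_r + ∑_{j<r} c_j 𝗉_j`: the range
`k ≤ n + 1 - r` may be extended to all `k ≤ n`, because for `k ≥ n + 2 - r` the factor
`x_k - x_k` vanishes. Newton's identities give `𝗉_m = ±m e_m + ∑_{j<m} c_j e_j`. A change of
generators that is triangular with unit diagonal preserves the generated ideal, and over `ℚ`
the diagonal `±m` is a unit.
-/

open MvPolynomial Finset

theorem Ideal.span_image_Icc_eq_of_unitriangular {A : Type*} [CommRing A] (f g u : ℕ → A)
    (n : ℕ) (hu : ∀ r ∈ Set.Icc 1 n, IsUnit (u r))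
    (hfg : ∀ r ∈ Set.Icc 1 n, f r - u r * g r ∈ Ideal.span (g '' Set.Ico 1 r)) :
    Ideal.span (f '' Set.Icc 1 n) = Ideal.span (g '' Set.Icc 1 n) := by
  apply le_antisymm
  · rw [Ideal.span_le]
    rintro _ ⟨r, hr, rfl⟩
    rw [← sub_add_cancel (f r) (u r * g r)]
    refine Ideal.add_mem _ ?_ (Ideal.mul_mem_left _ _ (Ideal.subset_span ⟨r, hr, rfl⟩))
    have hsub : Set.Ico 1 r ⊆ Set.Icc 1 n :=
      Set.Ico_subset_Icc_self.trans (Set.Icc_subset_Icc_right hr.2)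
    exact Ideal.span_mono (Set.image_mono hsub) (hfg r hr)
  · rw [Ideal.span_le]
    rintro _ ⟨r, hr, rfl⟩
    induction r using Nat.strong_induction_on with
    | _ r ih =>
      have hlower : Ideal.span (g '' Set.Ico 1 r) ≤ Ideal.span (f '' Set.Icc 1 n) := by
        rw [Ideal.span_le]
        rintro _ ⟨s, hs, rfl⟩
        exact ih s hs.2 ⟨hs.1, hs.2.le.trans hr.2⟩
      obtain ⟨v, hv⟩ := (hu r hr).exists_left_inv
      have hgr : g r = v * (f r - (f r - u r * g r)) := by
        rw [sub_sub_cancel, ← mul_assoc, hv, one_mul]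
      rw [hgr]
      exact Ideal.mul_mem_left _ _ (Ideal.sub_mem _ (Ideal.subset_span ⟨r, hr, rfl⟩)
        (hlower (hfg r hr)))

namespace MvPolynomial

variable (σ R : Type*) [Fintype σ] [CommRing R]

theorem psum_sub_mul_esymm_mem_span_esymm {m : ℕ} (hm : 0 < m) :
    psum σ R m - (-1) ^ (m + 1) * m * esymm σ R m ∈ Ideal.span (esymm σ R '' Set.Ico 1 m) := by
  rw [psum_eq_mul_esymm_sub_sum σ R m hm, sub_sub_cancel_left]
  refine neg_mem (Ideal.sum_mem _ fun a ha => ?_)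
  obtain ⟨-, hpos, hlt⟩ := Finset.mem_filter.mp ha
  exact Ideal.mul_mem_right _ _
    (Ideal.mul_mem_left _ _ (Ideal.subset_span ⟨a.1, ⟨hpos, hlt⟩, rfl⟩))

theorem span_psum_eq_span_esymm [Algebra ℚ R] (n : ℕ) :
    Ideal.span (psum σ R '' Set.Icc 1 n) = Ideal.span (esymm σ R '' Set.Icc 1 n) := by
  refine Ideal.span_image_Icc_eq_of_unitriangular _ _
    (fun m : ℕ => (-1) ^ (m + 1) * (m : MvPolynomial σ R)) n
    (fun m hm => ?_) fun m hm => psum_sub_mul_esymm_mem_span_esymm σ R hm.1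
  have hm0 : (m : ℚ) ≠ 0 := Nat.cast_ne_zero.mpr (Nat.one_le_iff_ne_zero.mp hm.1)
  refine (isUnit_neg_one.pow _).mul ?_
  simpa using (isUnit_iff_ne_zero.mpr hm0).map (algebraMap ℚ (MvPolynomial σ R))

end MvPolynomial

theorem mul_prod_sub_eq_sum_powerset {ι R : Type*} [DecidableEq ι] [CommRing R] (s : Finset ι)
    (a : R) (b : ι → R) :
    a * ∏ l ∈ s, (a - b l) = ∑ t ∈ s.powerset, a ^ (#t + 1) * ∏ l ∈ s \ t, -b l := by
  simp_rw [sub_eq_add_neg, prod_add, mul_sum, prod_const, ← mul_assoc, ← pow_succ']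

lemma xq_one_add (n : ℕ) (i : Fin n) : xq n (1 + i) = X i := by
  simp [xq]

lemma powsum_eq_psum (n m : ℕ) : powsum n m = psum (Fin n) ℚ m := by
  rw [powsum, ← Ico_add_one_right_eq_Icc, sum_Ico_eq_sum_range, Nat.add_sub_cancel,
    ← Fin.sum_univ_eq_sum_range (fun i => xq n (1 + i) ^ m), psum]
  simp only [xq_one_add]

lemma qpoly_eq_sum_powerset {n r : ℕ} (hr : r ∈ Set.Icc 1 n) :
    qpoly n r = ∑ t ∈ (Icc (n + 2 - r) n).powerset,
      powsum n (#t + 1) * ∏ l ∈ Icc (n + 2 - r) n \ t, -xq n l := by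
  obtain ⟨hr1, -⟩ := hr
  have hsum :
      qpoly n r = ∑ k ∈ Icc 1 n, xq n k * ∏ l ∈ Icc (n + 2 - r) n, (xq n k - xq n l) := by
    refine sum_subset (Icc_subset_Icc_right (by omega)) fun k hk hk' => ?_
    have hkS : k ∈ Icc (n + 2 - r) n := by simp only [mem_Icc] at hk hk' ⊢; omega
    rw [prod_eq_zero hkS (sub_self _), mul_zero]
  simp_rw [hsum, mul_prod_sub_eq_sum_powerset, powsum]
  rw [sum_comm]
  simp_rw [sum_mul]

lemma qpoly_sub_powsum_mem_span {n r : ℕ} (hr : r ∈ Set.Icc 1 n) :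
    qpoly n r - powsum n r ∈ Ideal.span (powsum n '' Set.Ico 1 r) := by
  have hcard : #(Icc (n + 2 - r) n) + 1 = r := by simp only [Nat.card_Icc]; grind
  rw [qpoly_eq_sum_powerset hr, ← add_sum_erase _ _ (mem_powerset_self _), Finset.sdiff_self,
    prod_empty, mul_one, hcard, add_sub_cancel_left]
  refine Ideal.sum_mem _ fun t ht =>
    Ideal.mul_mem_right _ _ (Ideal.subset_span ⟨#t + 1, ?_, rfl⟩)
  obtain ⟨hne, hsub⟩ := mem_erase.mp ht
  have hlt := card_lt_card ((mem_powerset.mp hsub).ssubset_of_ne hne)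
  exact ⟨by omega, by omega⟩

theorem stmt9_general (n : ℕ) :
    Ideal.span ((fun r => qpoly n r) '' Set.Icc 1 n) =
        Ideal.span ((fun m => powsum n m) '' Set.Icc 1 n) ∧
      Ideal.span ((fun m => powsum n m) '' Set.Icc 1 n) =
        Ideal.span ((fun i => MvPolynomial.esymm (Fin n) ℚ i) '' Set.Icc 1 n) := by
  refine ⟨Ideal.span_image_Icc_eq_of_unitriangular _ _ 1 n (fun _ _ => isUnit_one)
    fun r hr => by simpa using qpoly_sub_powsum_mem_span hr, ?_⟩
  rw [show (fun m => powsum n m) = psum (Fin n) ℚ from funext (powsum_eq_psum n)]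
  exact span_psum_eq_span_esymm (Fin n) ℚ n

/-- In `ℚ[x_1,…,x_n]`, the ideal generated by `q_1, …, q_n` equals the ideal generated by
the power sums `𝗉_1, …, 𝗉_n`, and both equal the ideal generated by the elementary
symmetric polynomials `e_1(x_1,…,x_n), …, e_n(x_1,…,x_n)`. -/
theorem stmt9 (n : ℕ) (hn : 1 ≤ n) :
    Ideal.span ((fun r => qpoly n r) '' Set.Icc 1 n) =
        Ideal.span ((fun m => powsum n m) '' Set.Icc 1 n) ∧
      Ideal.span ((fun m => powsum n m) '' Set.Icc 1 n) =
        Ideal.span ((fun i => MvPolynomial.esymm (Fin n) ℚ i) '' Set.Icc 1 n) :=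
  stmt9_general n
end

section
/- Let n ≥ 2. In the polynomial ring ℤ[x_1,…,x_n], the ideal generated by the power sums 𝗉_1,…,𝗉_n, where 𝗉_m := Σ_{k=1}^{n} x_k^m, is NOT equal to the ideal generated by the elementary symmetric polynomials e_1(x_1,…,x_n),…,e_n(x_1,…,x_n). -/
open MvPolynomial Finset

/-!
Evaluate at the point `(1, 1, 0, …, 0)` with values in `ℤ/2`. Every power sum `𝗉_m` with
`m ≥ 1` takes the value `2 = 0` there, so the ideal generated by the power sums lies in the kernel
of this evaluation, whereas `e_2` takes the value `1`.
-/

/-- The variable `x_k` (for `1 ≤ k ≤ n`) in `ℤ[x_1,…,x_n]`. -/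
noncomputable def xz (n : ℕ) (k : ℕ) : MvPolynomial (Fin n) ℤ :=
  if h : k - 1 < n then X (⟨k - 1, h⟩ : Fin n) else 0

/-- The `m`-th power sum `𝗉_m = ∑_{k=1}^{n} x_k^m` in `ℤ[x_1,…,x_n]`. -/
noncomputable def powsumZ (n : ℕ) (m : ℕ) : MvPolynomial (Fin n) ℤ :=
  ∑ k ∈ Finset.Icc 1 n, xz n k ^ m

theorem powsumZ_eq_psum (n m : ℕ) : powsumZ n m = psum (Fin n) ℤ m := by
  rw [powsumZ, psum, ← Finset.Ico_add_one_right_eq_Icc, ← Finset.sum_Ico_add' (c := 1) (a := 0),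
    ← Finset.range_eq_Ico, ← Fin.sum_univ_eq_sum_range (fun k => xz n (k + 1) ^ m)]
  simp [xz]

section IndicatorPoint

variable {σ R S : Type*} [Fintype σ] [CommSemiring R] [CommSemiring S] [Algebra R S]
  (s : Finset σ)

theorem aeval_indicator_psum {m : ℕ} (hm : m ≠ 0) :
    aeval ((s : Set σ).indicator 1) (psum σ R m) = (#s : S) := by
  classical
  simp [psum, Set.indicator_apply, zero_pow hm, Finset.sum_ite_mem]

theorem aeval_indicator_esymm (k : ℕ) :
    aeval ((s : Set σ).indicator 1) (esymm σ R k) = ((#s).choose k : S) := by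
  classical
  have hprod : ∀ t : Finset σ, ∏ i ∈ t, (s : Set σ).indicator (1 : σ → S) i =
      if t ⊆ s then 1 else 0 := fun t => by
    simp only [Set.indicator_apply, Finset.mem_coe, Pi.one_apply, Finset.prod_boole]
    rfl
  simp only [esymm, map_sum, map_prod, aeval_X, hprod, Finset.sum_boole]
  rw [← Finset.card_powersetCard]
  congr 2
  ext t
  simp [Finset.subset_iff, and_comm]

end IndicatorPoint

/-- For `n ≥ 2`, in `ℤ[x_1,…,x_n]` the ideal generated by the power sums `𝗉_1, …, 𝗉_n`
is NOT equal to the ideal generated by the elementary symmetric polynomials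
`e_1, …, e_n`. -/
theorem stmt10 (n : ℕ) (hn : 2 ≤ n) :
    Ideal.span ((fun m => powsumZ n m) '' Set.Icc 1 n) ≠
      Ideal.span ((fun i => MvPolynomial.esymm (Fin n) ℤ i) '' Set.Icc 1 n) := by
  intro h
  set s : Finset (Fin n) := univ.map (Fin.castLEEmb hn)
  have hs : #s = 2 := by simp [s]
  set ev := aeval (R := ℤ) ((s : Set (Fin n)).indicator (1 : Fin n → ZMod 2))
  have hpsum : ∀ m ∈ Set.Icc 1 n, ev (powsumZ n m) = 0 := fun m hm => by
    rw [powsumZ_eq_psum, aeval_indicator_psum s (Nat.one_le_iff_ne_zero.1 hm.1), hs]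
    rfl
  have hesymm : ev (esymm (Fin n) ℤ 2) = 1 := by
    rw [aeval_indicator_esymm, hs]
    rfl
  have hker : Ideal.span ((fun m => powsumZ n m) '' Set.Icc 1 n) ≤ RingHom.ker ev :=
    Ideal.span_le.2 <| Set.image_subset_iff.2 fun m hm => RingHom.mem_ker.2 (hpsum m hm)
  have hmem : esymm (Fin n) ℤ 2 ∈ RingHom.ker ev :=
    hker (h ▸ Ideal.subset_span ⟨2, ⟨one_le_two, hn⟩, rfl⟩)
  exact one_ne_zero (hesymm.symm.trans (RingHom.mem_ker.1 hmem))
end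

section
/- Let h : {1,…,n} → {1,…,n} be a Hessenberg function and let w be a permutation of {1,…,n} such that for every k with w(k) ≥ 2 one has w⁻¹(w(k) − 1) ≤ h(k). Then for every j with 1 ≤ j ≤ n, the polynomial in ℚ[t] obtained from f_{h(j),j} by substituting x_i ↦ w(i)·t for each i = 1,…,n is identically zero. -/
/-!
Substituting `x_{l+1} ↦ a l • t` turns `f_{i,j}` into `c_{i,j} t^(i-j+1)`, and the scalars have
the closed form
`c_{i,j} = ∑_{k<j} (a k - 1) ∏_{l<i, l≠k} (a k - a l - 1) / ∏_{l<j, l≠k} (a k - a l)`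
as soon as the `a l` are distinct. Off the diagonal the recursion holds term by term; on the
diagonal it reduces to Lagrange interpolation of `(X - 1) ∏_{l<j} (X - a l - 1)` at the nodes
`a 0, …, a j`. For `a l = w(l) + 1`, every term of `c_{h(j),j}` has a zero factor: either
`a k = 1`, or the hypothesis on `w` yields `m < h(k+1) ≤ h(j)` with `a m = a k - 1`.
-/

open MvPolynomial Finset

namespace Lagrange

open Polynomial

theorem sum_eval_div_of_monic {K ι : Type*} [Field K] [DecidableEq ι] {s : Finset ι}
    {v : ι → K} (hvs : Set.InjOn v s) {P : K[X]} (hP : P.Monic) (hdeg : P.natDegree = #s) :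
    ∑ i ∈ s, P.eval (v i) / ∏ j ∈ s.erase i, (v i - v j) = P.nextCoeff + ∑ i ∈ s, v i := by
  rcases s.eq_empty_or_nonempty with rfl | hs
  · simp [nextCoeff, hdeg]
  have hnodal : (nodal s v).natDegree = #s := natDegree_nodal
  have hlt : (P - nodal s v).degree < #s := by
    have := degree_sub_lt_left (p := P) (q := nodal s v) ?_ hP.ne_zero ?_
    · rwa [degree_eq_natDegree hP.ne_zero, hdeg] at this
    · rw [degree_eq_natDegree hP.ne_zero, degree_eq_natDegree nodal_ne_zero, hdeg, hnodal]
    · rw [hP.leadingCoeff, nodal_monic.leadingCoeff]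
  have hpos : 0 < #s := hs.card_pos
  calc ∑ i ∈ s, P.eval (v i) / ∏ j ∈ s.erase i, (v i - v j)
      = ∑ i ∈ s, (P - nodal s v).eval (v i) / ∏ j ∈ s.erase i, (v i - v j) :=
        sum_congr rfl fun i hi => by rw [Polynomial.eval_sub, eval_nodal_at_node hi, sub_zero]
    _ = P.coeff (#s - 1) - (nodal s v).coeff (#s - 1) := by
        rw [← coeff_eq_sum hvs hlt, Polynomial.coeff_sub]
    _ = P.nextCoeff + ∑ i ∈ s, v i := by
        rw [nextCoeff_of_natDegree_pos (by omega), hdeg, ← hnodal,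
          ← nextCoeff_of_natDegree_pos (by omega), nodal, prod_X_sub_C_nextCoeff, sub_neg_eq_add]

end Lagrange

theorem Finset.prod_range_succ_erase {M : Type*} [CommMonoid M] (f : ℕ → M) {i k : ℕ}
    (hk : k ≠ i) : ∏ l ∈ (range (i + 1)).erase k, f l = (∏ l ∈ (range i).erase k, f l) * f i := by
  rw [range_add_one, erase_insert_of_ne hk.symm, prod_insert (by simp), mul_comm]

theorem Finset.range_succ_erase_self (i : ℕ) : (range (i + 1)).erase i = range i := by
  rw [range_add_one, erase_insert (by simp)]

section ClosedForm

variable {K : Type*} [Field K] (a : ℕ → K)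

def fClosedTerm (i j k : ℕ) : K :=
  (a k - 1) * (∏ l ∈ (range i).erase k, (a k - a l - 1)) / ∏ l ∈ (range j).erase k, (a k - a l)

def fClosed (i j : ℕ) : K := ∑ k ∈ range j, fClosedTerm a i j k

variable {a}

theorem fClosedTerm_succ_succ {i j k : ℕ} (hki : k ≠ i) (hkj : k ≠ j) (ha : a k ≠ a j) :
    fClosedTerm a (i + 1) (j + 1) k
      = fClosedTerm a i j k + (a j - a i - 1) * fClosedTerm a i (j + 1) k := by
  have hkj' : a k - a j ≠ 0 := sub_ne_zero_of_ne ha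
  simp only [fClosedTerm, prod_range_succ_erase _ hki, prod_range_succ_erase _ hkj]
  rcases eq_or_ne (∏ l ∈ (range j).erase k, (a k - a l)) 0 with hD | hD
  · simp [hD]
  · field_simp
    ring

theorem fClosed_succ_succ {i j : ℕ} (hji : j < i) (ha : Set.InjOn a (range i)) :
    fClosed a (i + 1) (j + 1) = fClosed a i j + (a j - a i - 1) * fClosed a i (j + 1) := by
  have hj : j ∈ range i := mem_range.2 hji
  have hterm : ∀ k ∈ range j, fClosedTerm a (i + 1) (j + 1) k
      = fClosedTerm a i j k + (a j - a i - 1) * fClosedTerm a i (j + 1) k := fun k hk => by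
    have hk : k < j := mem_range.1 hk
    exact fClosedTerm_succ_succ (by omega) (by omega)
      (ha.ne (mem_range.2 (by omega)) hj (by omega))
  have htop : fClosedTerm a (i + 1) (j + 1) j = (a j - a i - 1) * fClosedTerm a i (j + 1) j := by
    simp only [fClosedTerm, prod_range_succ_erase _ hji.ne]
    ring
  rw [fClosed, sum_range_succ, sum_congr rfl hterm, sum_add_distrib, htop, fClosed, fClosed,
    sum_range_succ _ j, mul_add, mul_sum]
  ring

theorem fClosedTerm_eq_zero {i j k : ℕ} (h : a k = 1 ∨ ∃ m < i, a m + 1 = a k) :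
    fClosedTerm a i j k = 0 := by
  rcases h with h | ⟨m, hmi, hm⟩
  · simp [fClosedTerm, h]
  · have hmk : m ≠ k := by rintro rfl; simp at hm
    rw [fClosedTerm, prod_eq_zero (mem_erase.2 ⟨hmk, mem_range.2 hmi⟩) (by rw [← hm]; ring)]
    simp

open Polynomial in
theorem fClosed_self {j : ℕ} (ha : Set.InjOn a (range j)) :
    fClosed a j j = ∑ k ∈ range j, (a k - (k + 1)) := by
  induction j with
  | zero => simp [fClosed]
  | succ j ih =>
    set F : K[X] := (Polynomial.X - Polynomial.C 1) * Lagrange.nodal (range j) (a · + 1) with hF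
    have hFmonic : F.Monic := (monic_X_sub_C 1).mul Lagrange.nodal_monic
    have hFdeg : F.natDegree = #(range (j + 1)) := by
      rw [(monic_X_sub_C 1).natDegree_mul Lagrange.nodal_monic, Lagrange.natDegree_nodal,
        natDegree_X_sub_C, card_range, card_range, add_comm]
    have hFnext : F.nextCoeff + ∑ k ∈ range (j + 1), a k = a j - (j + 1) := by
      rw [(monic_X_sub_C 1).nextCoeff_mul Lagrange.nodal_monic, nextCoeff_X_sub_C,
        Lagrange.nodal, prod_X_sub_C_nextCoeff, sum_range_succ, sum_add_distrib]
      simp only [sum_const, card_range, nsmul_eq_mul, mul_one]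
      ring
    have hlow : ∀ k ∈ range j, fClosedTerm a (j + 1) (j + 1) k
        = fClosedTerm a j j k + F.eval (a k) / ∏ l ∈ (range (j + 1)).erase k, (a k - a l) := by
      intro k hk
      have hkj : k < j := mem_range.1 hk
      rw [fClosedTerm_succ_succ hkj.ne hkj.ne (ha.ne (by simp; omega) (by simp) hkj.ne),
        hF, Polynomial.eval_mul, Lagrange.eval_nodal, ← mul_prod_erase _ _ hk]
      simp only [fClosedTerm, Polynomial.eval_sub, Polynomial.eval_X, Polynomial.eval_C, sub_sub]
      ring
    have htop : fClosedTerm a (j + 1) (j + 1) j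
        = F.eval (a j) / ∏ l ∈ (range (j + 1)).erase j, (a j - a l) := by
      simp only [fClosedTerm, hF, Polynomial.eval_mul, Lagrange.eval_nodal, range_succ_erase_self,
        Polynomial.eval_sub, Polynomial.eval_X, Polynomial.eval_C, sub_sub]
    calc fClosed a (j + 1) (j + 1)
        = fClosed a j j + ∑ k ∈ range (j + 1), F.eval (a k) / ∏ l ∈ (range (j + 1)).erase k,
            (a k - a l) := by
          rw [fClosed, sum_range_succ, sum_congr rfl hlow, sum_add_distrib, htop, fClosed,
            sum_range_succ _ j, add_assoc]
      _ = ∑ k ∈ range (j + 1), (a k - (k + 1)) := by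
          rw [Lagrange.sum_eval_div_of_monic ha hFmonic hFdeg, hFnext,
            ih (ha.mono (by simp)), sum_range_succ]

end ClosedForm

section Specialization

variable {n : ℕ} (a : ℕ → ℚ)

noncomputable def lineSubst : Option (Fin n) → Polynomial ℚ :=
  fun v => v.elim Polynomial.X fun i => Polynomial.C (a i) * Polynomial.X

variable {a}

theorem aeval_lineSubst_tv : aeval (lineSubst a) (tv n) = Polynomial.X := by
  rw [tv, aeval_X]
  rfl

theorem aeval_lineSubst_xv {k : ℕ} (hk : k < n) :
    aeval (lineSubst a) (xv n (k + 1)) = Polynomial.C (a k) * Polynomial.X := by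
  rw [xv, dif_pos (by omega), aeval_X]
  rfl

theorem aeval_lineSubst_pp {i : ℕ} (hi : i ≤ n) :
    aeval (lineSubst a) (pp n i)
      = Polynomial.C (∑ k ∈ range i, (a k - (k + 1))) * Polynomial.X := by
  rw [pp, map_sum, map_sum, sum_mul]
  refine sum_congr rfl fun k hk => ?_
  rw [map_sub, map_mul, aeval_lineSubst_xv (by simp at hk; omega), aeval_lineSubst_tv, aeval_C]
  simp only [map_sub, map_add, map_natCast, map_one]
  ring

theorem aeval_lineSubst_ff {i j : ℕ} (hji : j ≤ i) (hin : i ≤ n) (ha : Set.InjOn a (range i)) :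
    aeval (lineSubst a) (ff n i j) = Polynomial.C (fClosed a i j) * Polynomial.X ^ (i - j + 1) := by
  induction i generalizing j with
  | zero =>
    obtain rfl : j = 0 := by omega
    simp [ff, fClosed]
  | succ i ih =>
    cases j with
    | zero => simp [ff, fClosed]
    | succ j =>
      rcases eq_or_ne i j with rfl | hij
      · rw [ff, if_pos rfl, aeval_lineSubst_pp hin, fClosed_self ha, Nat.sub_self, zero_add,
          pow_one]
      · have hji' : j < i := by omega
        have hinj : Set.InjOn a (range i) := ha.mono (by simp)
        rw [ff, if_neg hij, map_add, map_mul, map_sub, map_sub, aeval_lineSubst_xv (by omega),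
          aeval_lineSubst_xv (by omega), aeval_lineSubst_tv, ih (by omega) (by omega) hinj,
          ih hji' (by omega) hinj, fClosed_succ_succ hji' hinj,
          show i + 1 - (j + 1) + 1 = i - (j + 1) + 1 + 1 by omega,
          show i - j + 1 = i - (j + 1) + 1 + 1 by omega]
        simp only [map_add, map_mul, map_sub, map_one]
        ring

end Specialization

section Permutation

variable {n : ℕ} (w : Equiv.Perm (Fin n))

def permValue (k : ℕ) : ℚ := if h : k < n then (w ⟨k, h⟩ : ℕ) + 1 else 0

theorem permValue_val (i : Fin n) : permValue w i = (w i : ℕ) + 1 := by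
  simp [permValue]

theorem injOn_permValue : Set.InjOn (permValue w) (range n) := by
  intro k hk l hl hkl
  have hk : k < n := mem_range.1 hk
  have hl : l < n := mem_range.1 hl
  simp only [permValue, dif_pos hk, dif_pos hl, add_left_inj, Nat.cast_inj] at hkl
  simpa using w.injective (Fin.ext hkl)

theorem lineSubst_permValue :
    lineSubst (permValue w) = fun v : Option (Fin n) => Option.elim v Polynomial.X
      fun i => (((w i : ℕ) + 1 : ℕ) : Polynomial ℚ) * Polynomial.X := by
  funext v
  cases v with
  | none => simp only [lineSubst, Option.elim_none]
  | some i =>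
    simp only [lineSubst, Option.elim_some, permValue_val]
    push_cast
    rw [map_add, map_natCast, map_one]

end Permutation

/-- Let `h` be a Hessenberg function and let `w` be a permutation of `{1,…,n}` (realized
as `w : Equiv.Perm (Fin n)`, with `k : Fin n` corresponding to `k+1 ∈ {1,…,n}`) such that
for every `k` with `w(k) ≥ 2` one has `w⁻¹(w(k)-1) ≤ h(k)`.  Then for every `1 ≤ j ≤ n`,
substituting `x_i ↦ w(i)·t` (and `t ↦ t`) into `f_{h(j),j}` yields the zero polynomial
in `ℚ[t]`. -/
theorem stmt11 (n : ℕ) (h : ℕ → ℕ)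
    (hH1 : ∀ j : ℕ, 1 ≤ j → j ≤ n → j ≤ h j ∧ h j ≤ n)
    (hH2 : ∀ j : ℕ, 1 ≤ j → j < n → h j ≤ h (j + 1))
    (w : Equiv.Perm (Fin n))
    (hw : ∀ k : Fin n, 1 ≤ (w k : ℕ) →
      ((w.symm (⟨(w k : ℕ) - 1,
          Nat.lt_of_le_of_lt (Nat.sub_le _ _) (w k).isLt⟩ : Fin n) : ℕ) + 1)
        ≤ h ((k : ℕ) + 1)) :
    ∀ j : ℕ, 1 ≤ j → j ≤ n →
      MvPolynomial.aeval
        (fun v : Option (Fin n) => Option.elim v (Polynomial.X : Polynomial ℚ)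
          (fun i => (((w i : ℕ) + 1 : ℕ) : Polynomial ℚ) * Polynomial.X))
        (ff n (h j) j) = 0 := by
  intro j hj1 hjn
  obtain ⟨hjh, hhn⟩ := hH1 j hj1 hjn
  have hmono : MonotoneOn h (Set.Icc 1 n) :=
    monotoneOn_of_le_succ Set.ordConnected_Icc fun k _ hk hk' => by
      rw [Order.succ_eq_add_one] at hk' ⊢
      exact hH2 k hk.1 (by simp at hk'; omega)
  rw [← lineSubst_permValue,
    aeval_lineSubst_ff hjh hhn ((injOn_permValue w).mono (coe_subset.2 (range_subset_range.2 hhn))),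
    fClosed, sum_eq_zero, map_zero, zero_mul]
  intro k hk
  have hkj : k < j := mem_range.1 hk
  lift k to Fin n using by omega
  apply fClosedTerm_eq_zero
  rcases Nat.eq_zero_or_pos (w k : ℕ) with hzero | hpos
  · left
    rw [permValue_val, hzero]
    simp
  · right
    refine ⟨w.symm ⟨(w k : ℕ) - 1, by omega⟩, ?_, ?_⟩
    · have := hw k hpos
      have := hmono ⟨by omega, by omega⟩ ⟨hj1, hjn⟩ (show (k : ℕ) + 1 ≤ j by omega)
      omega
    · rw [permValue_val, permValue_val, Equiv.apply_symm_apply, Nat.cast_sub hpos]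
      simp
end

section
/- Let h : {1,…,n} → {1,…,n} be any Hessenberg function. Then the n polynomials f̌_{h(1),1}, f̌_{h(2),2}, …, f̌_{h(n),n} form a regular sequence in the polynomial ring ℚ[x_1,…,x_n]. -/
open MvPolynomial Finset

/-- `f̌_{i,j} = ∑_{k=1}^{j} x_k ∏_{ℓ=j+1}^{i} (x_k - x_ℓ)`, the `t = 0` specialization of
`f_{i,j}` (the empty product is `1` when `i = j`). -/
noncomputable def fcheck (n : ℕ) (i j : ℕ) : MvPolynomial (Fin n) ℚ :=
  ∑ k ∈ Finset.Icc 1 j, xq n k * ∏ l ∈ Finset.Icc (j + 1) i, (xq n k - xq n l)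

/-!
Induction on `n`, proving more generally that the weighted polynomials
`f_j = ∑_{k ≤ j} w_k x_k ∏_{j < l ≤ h(j)} (x_k - x_l)` form a regular sequence for all positive
rational weights `w`. The first one, `w₁ x₁ ∏_{2 ≤ m ≤ h(1)} (x₁ - x_m)`, is a product of linear
forms, and the short exact sequences `0 → M/aM → M/abM → M/bM → 0` reduce the claim to the
sequences headed by a single factor `x₁ - t`, `t ∈ {0, x_2, …, x_{h(1)}}`. Modulo `x₁ - t` the ring
is `ℚ[x_2,…,x_{n+1}]`, and `f_2, …, f_{n+1}` become weighted polynomials for the Hessenberg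
function `j ↦ h(j+1) - 1`: for `t = x_m` the `k = 1` summand merges into the `k = m` summand,
whose weight becomes `w_1 + w_m`, or it vanishes when `m > j`, through its factor `x_m - x_m`
(this uses `m ≤ h(1) ≤ h(j)`). Positivity keeps every leading weight a unit.
-/

open Function Pointwise Submodule RingTheory.Sequence

lemma Submodule.mem_smul_top_iff_exists {R M : Type*} [CommSemiring R] [AddCommMonoid M]
    [Module R M] {r : R} {x : M} : x ∈ r • (⊤ : Submodule R M) ↔ ∃ y, r • y = x := by
  simp [mem_smul_pointwise_iff_exists]

namespace RingTheory.Sequence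

variable {R : Type*} [CommRing R]

theorem IsWeaklyRegular.of_injective_of_exact {M' M M'' : Type*} [AddCommGroup M']
    [Module R M'] [AddCommGroup M] [Module R M] [AddCommGroup M''] [Module R M'']
    {f : M' →ₗ[R] M} {g : M →ₗ[R] M''} (hf : Injective f) (hg : Surjective g) (hfg : Exact f g)
    {rs : List R} (h' : IsWeaklyRegular M' rs) (h'' : IsWeaklyRegular M'' rs) :
    IsWeaklyRegular M rs := by
  induction rs generalizing M' M M'' with
  | nil => exact IsWeaklyRegular.nil R M
  | cons r rs ih =>
    rw [isWeaklyRegular_cons_iff] at h' h'' ⊢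
    refine ⟨isSMulRegular_of_range_eq_ker hf hfg.linearMap_ker_eq.symm h'.1 h''.1,
      ih ?_ (QuotSMulTop.map_surjective r hg) (QuotSMulTop.map_exact r hfg hg) h'.2 h''.2⟩
    -- `f` stays injective modulo `r` because `r` is regular on `M''`
    have h0 := QuotSMulTop.map_first_exact_on_four_term_exact_of_isSMulRegular_last (r := r)
      ((LinearMap.exact_zero_iff_injective PUnit f).mpr hf) hfg h''.1
    rwa [map_zero, LinearMap.exact_zero_iff_injective] at h0

section Module

variable {M : Type*} [AddCommGroup M] [Module R M]

theorem IsWeaklyRegular.mul_cons {a b : R} {rs : List R} (ha : IsWeaklyRegular M (a :: rs))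
    (hb : IsWeaklyRegular M (b :: rs)) : IsWeaklyRegular M (a * b :: rs) := by
  rw [isWeaklyRegular_cons_iff] at ha hb ⊢
  -- `0 → M/aM → M/abM → M/bM → 0`, the first map being `b • ·`
  let f : QuotSMulTop a M →ₗ[R] QuotSMulTop (a * b) M :=
    mapQ _ _ (LinearMap.lsmul R M b) fun x hx => by
      obtain ⟨y, rfl⟩ := mem_smul_top_iff_exists.mp hx
      exact mem_smul_top_iff_exists.mpr ⟨y, by simp [smul_smul]⟩
  let g : QuotSMulTop (a * b) M →ₗ[R] QuotSMulTop b M :=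
    factor fun x hx => by
      obtain ⟨y, rfl⟩ := mem_smul_top_iff_exists.mp hx
      exact mem_smul_top_iff_exists.mpr ⟨a • y, by simp [smul_smul, mul_comm]⟩
  have hf : Injective f := by
    refine (injective_iff_map_eq_zero _).mpr fun x hx => ?_
    obtain ⟨x, rfl⟩ := Submodule.Quotient.mk_surjective _ x
    obtain ⟨y, hy⟩ := mem_smul_top_iff_exists.mp ((Submodule.Quotient.mk_eq_zero _).mp hx)
    rw [mul_comm, ← smul_smul] at hy
    exact (Submodule.Quotient.mk_eq_zero _).mpr (mem_smul_top_iff_exists.mpr ⟨y, hb.1 hy⟩)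
  have hfg : Exact f g := by
    intro x
    obtain ⟨x, rfl⟩ := Submodule.Quotient.mk_surjective _ x
    refine ⟨fun hx => ?_, ?_⟩
    · obtain ⟨y, rfl⟩ := mem_smul_top_iff_exists.mp ((Submodule.Quotient.mk_eq_zero _).mp hx)
      exact ⟨Submodule.Quotient.mk y, rfl⟩
    · rintro ⟨y, hy⟩
      obtain ⟨y, rfl⟩ := Submodule.Quotient.mk_surjective _ y
      rw [← hy]
      exact (Submodule.Quotient.mk_eq_zero _).mpr (mem_smul_top_iff_exists.mpr ⟨y, rfl⟩)
  exact ⟨ha.1.mul hb.1,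
    IsWeaklyRegular.of_injective_of_exact hf (factor_surjective _) hfg ha.2 hb.2⟩

theorem IsRegular.mul_cons {a b : R} {rs : List R} (ha : IsRegular M (a :: rs))
    (hb : IsRegular M (b :: rs)) : IsRegular M (a * b :: rs) := by
  refine ⟨ha.toIsWeaklyRegular.mul_cons hb.toIsWeaklyRegular, fun htop => ha.top_ne_smul ?_⟩
  refine (top_le_iff.mp (htop.le.trans (smul_mono_left ?_))).symm
  rw [Ideal.ofList_cons, Ideal.ofList_cons]
  exact sup_le_sup_right (Ideal.span_singleton_le_span_singleton.mpr (dvd_mul_right a b)) _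

theorem IsRegular.mul_prod_cons {ι : Type*} {a : R} {s : Finset ι} {f : ι → R} {rs : List R}
    (ha : IsRegular M (a :: rs)) (hf : ∀ i ∈ s, IsRegular M (f i :: rs)) :
    IsRegular M ((a * ∏ i ∈ s, f i) :: rs) := by
  classical
  induction s using Finset.induction with
  | empty => simpa using ha
  | insert i s hi ih =>
    rw [Finset.prod_insert hi, mul_left_comm]
    exact (hf i (Finset.mem_insert_self i s)).mul_cons
      (ih fun j hj => hf j (Finset.mem_insert_of_mem hj))

end Module

variable {S : Type*} [CommRing S]

theorem isRegular_cons_iff_of_ker_eq_span {φ : R →+* S} (hφ : Surjective φ) {L : R}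
    (hker : RingHom.ker φ = Ideal.span {L}) (hL : IsSMulRegular R L) (rs : List R) :
    IsRegular R (L :: rs) ↔ IsRegular S (rs.map φ) := by
  have hLker : L • (⊤ : Submodule R R) = RingHom.ker φ := by
    rw [hker, ← ideal_span_singleton_smul, smul_eq_mul, Ideal.mul_top]
  let e : QuotSMulTop L R ≃+ S := (quotEquivOfEq _ _ hLker).toAddEquiv.trans
    (RingHom.quotientKerEquivOfSurjective hφ).toAddEquiv
  rw [isRegular_cons_iff, and_iff_right hL]
  refine AddEquiv.isRegular_congr (e := e) (List.forall₂_map_right_iff.mpr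
    (List.forall₂_same.mpr fun r _ x => ?_))
  obtain ⟨x, rfl⟩ := Submodule.Quotient.mk_surjective _ x
  exact map_mul φ r x

open Polynomial in
theorem isRegular_cons_iff_of_associated_X_sub_C (e : R ≃+* S[X]) (t : S) {L : R}
    (hL : Associated (e L) (Polynomial.X - Polynomial.C t)) (rs : List R) :
    IsRegular R (L :: rs) ↔ IsRegular S (rs.map ((evalRingHom t).comp (e : R →+* S[X]))) := by
  obtain ⟨u, hu⟩ := hL
  refine isRegular_cons_iff_of_ker_eq_span (fun s => ⟨e.symm (C s), by simp⟩) ?_ ?_ rs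
  · rw [← RingHom.comap_ker, ker_evalRingHom, ← hu, Ideal.span_singleton_mul_right_unit u.isUnit]
    change Ideal.comap e _ = _
    rw [← Ideal.map_symm, Ideal.map_span, Set.image_singleton, e.symm_apply_apply]
  · have hreg : IsLeftRegular (e L) := IsLeftRegular.of_mul (a := (u : S[X])) <| by
      rw [mul_comm, hu]
      exact (monic_X_sub_C t).isRegular.left
    intro x y hxy
    apply e.injective
    exact hreg (by simpa only [smul_eq_mul, map_mul] using congrArg e hxy)

end RingTheory.Sequence

@[to_additive]
lemma Finset.prod_Icc_add' {M : Type*} [CommMonoid M] (f : ℕ → M) (a b c : ℕ) :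
    ∏ x ∈ Icc a b, f (x + c) = ∏ x ∈ Icc (a + c) (b + c), f x := by
  rw [← map_add_right_Icc, prod_map]
  rfl

lemma Finset.sum_Icc_one_succ {M : Type*} [AddCommMonoid M] (f : ℕ → M) (j : ℕ) :
    ∑ k ∈ Icc 1 (j + 1), f k = f 1 + ∑ k ∈ Icc 1 j, f (k + 1) := by
  rw [← insert_Icc_add_one_left_eq_Icc (by omega : 1 ≤ j + 1), sum_insert (by simp),
    sum_Icc_add']

section Weighted

variable {S : Type*} [CommRing S] [Module ℚ S]

noncomputable def fcheckWeighted (y : ℕ → S) (w : ℕ → ℚ) (i j : ℕ) : S :=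
  ∑ k ∈ Icc 1 j, w k • (y k * ∏ l ∈ Icc (j + 1) i, (y k - y l))

lemma fcheckWeighted_one (y : ℕ → S) (w : ℕ → ℚ) (i : ℕ) :
    fcheckWeighted y w i 1 = (w 1 • y 1) * ∏ l ∈ Icc 2 i, (y 1 - y l) := by
  simp [fcheckWeighted, smul_mul_assoc]

lemma fcheckWeighted_succ {y y' : ℕ → S} (hy : ∀ k, 1 ≤ k → y (k + 1) = y' k) (w : ℕ → ℚ)
    (i j : ℕ) :
    fcheckWeighted y w (i + 1) (j + 1) =
      w 1 • (y 1 * ∏ l ∈ Icc (j + 1) i, (y 1 - y' l)) +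
        fcheckWeighted y' (fun k => w (k + 1)) i j := by
  simp only [fcheckWeighted, sum_Icc_one_succ, ← prod_Icc_add']
  congr 1
  · congr 2
    exact prod_congr rfl fun l hl => by rw [hy l (le_trans (by omega) (mem_Icc.mp hl).1)]
  · refine sum_congr rfl fun k hk => ?_
    rw [hy k (mem_Icc.mp hk).1]
    congr 2
    exact prod_congr rfl fun l hl => by rw [hy l (le_trans (by omega) (mem_Icc.mp hl).1)]

lemma fcheckWeighted_add (y : ℕ → S) (w v : ℕ → ℚ) (i j : ℕ) :
    fcheckWeighted y (w + v) i j = fcheckWeighted y w i j + fcheckWeighted y v i j := by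
  simp [fcheckWeighted, add_smul, sum_add_distrib]

/-- For `p > j` both sides vanish: the right one because of the factor `y p - y p`. -/
lemma fcheckWeighted_single (y : ℕ → S) (c : ℚ) {p i : ℕ} (hp : 1 ≤ p) (hpi : p ≤ i) (j : ℕ) :
    fcheckWeighted y (Pi.single p c) i j = c • (y p * ∏ l ∈ Icc (j + 1) i, (y p - y l)) := by
  refine (sum_eq_single p (fun k _ hk => by simp [hk]) fun hpj => ?_).trans (by simp)
  rw [mem_Icc] at hpj
  rw [prod_eq_zero (i := p) (mem_Icc.mpr ⟨by omega, hpi⟩) (sub_self _), mul_zero, smul_zero]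

lemma map_fcheckWeighted {T : Type*} [CommRing T] [Module ℚ T] (φ : S →+* T) (y : ℕ → S)
    (w : ℕ → ℚ) (i j : ℕ) : φ (fcheckWeighted y w i j) = fcheckWeighted (φ ∘ y) w i j := by
  simp [fcheckWeighted, map_rat_smul]

end Weighted

section Polynomial

variable {n : ℕ}

lemma fcheck_eq_fcheckWeighted (n i j : ℕ) : fcheck n i j = fcheckWeighted (xq n) 1 i j := by
  simp [fcheck, fcheckWeighted]

lemma finSuccEquiv_xq_one : finSuccEquiv ℚ n (xq (n + 1) 1) = Polynomial.X := by
  simp [xq, finSuccEquiv_X_zero]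

lemma finSuccEquiv_xq_succ {k : ℕ} (hk : 1 ≤ k) :
    finSuccEquiv ℚ n (xq (n + 1) (k + 1)) = Polynomial.C (xq n k) := by
  unfold xq
  by_cases hkn : k - 1 < n
  · rw [dif_pos (by omega), dif_pos hkn, ← finSuccEquiv_X_succ]
    congr 2
    ext
    simp only [Fin.val_succ]
    omega
  · rw [dif_neg (by omega), dif_neg hkn, map_zero, map_zero]

/-- `x₁ ↦ t` and `x_{k+1} ↦ x_k` for `k ≥ 1`. -/
noncomputable def evalFirst (t : MvPolynomial (Fin n) ℚ) :
    MvPolynomial (Fin (n + 1)) ℚ →+* MvPolynomial (Fin n) ℚ :=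
  (Polynomial.evalRingHom t).comp ((finSuccEquiv ℚ n).toRingEquiv :
    MvPolynomial (Fin (n + 1)) ℚ →+* Polynomial (MvPolynomial (Fin n) ℚ))

lemma evalFirst_fcheckWeighted (t : MvPolynomial (Fin n) ℚ) (w : ℕ → ℚ) (i j : ℕ) :
    evalFirst t (fcheckWeighted (xq (n + 1)) w (i + 1) (j + 1)) =
      w 1 • (t * ∏ l ∈ Icc (j + 1) i, (t - xq n l)) +
        fcheckWeighted (xq n) (fun k => w (k + 1)) i j := by
  rw [map_fcheckWeighted, fcheckWeighted_succ (y' := xq n) fun k hk => ?_]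
  · simp [evalFirst, finSuccEquiv_xq_one]
  · simp [evalFirst, finSuccEquiv_xq_succ hk]

lemma evalFirst_zero_fcheckWeighted (w : ℕ → ℚ) (i j : ℕ) :
    evalFirst 0 (fcheckWeighted (xq (n + 1)) w (i + 1) (j + 1)) =
      fcheckWeighted (xq n) (fun k => w (k + 1)) i j := by
  simp [evalFirst_fcheckWeighted]

lemma evalFirst_xq_fcheckWeighted {p i : ℕ} (hp : 1 ≤ p) (hpi : p ≤ i) (w : ℕ → ℚ) (j : ℕ) :
    evalFirst (xq n p) (fcheckWeighted (xq (n + 1)) w (i + 1) (j + 1)) =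
      fcheckWeighted (xq n) ((fun k => w (k + 1)) + Pi.single p (w 1)) i j := by
  rw [evalFirst_fcheckWeighted, fcheckWeighted_add, fcheckWeighted_single _ _ hp hpi, add_comm]

lemma isRegular_cons_iff_evalFirst {t : MvPolynomial (Fin n) ℚ} {L : MvPolynomial (Fin (n + 1)) ℚ}
    (hL : Associated (finSuccEquiv ℚ n L) (Polynomial.X - Polynomial.C t))
    (rs : List (MvPolynomial (Fin (n + 1)) ℚ)) :
    IsRegular (MvPolynomial (Fin (n + 1)) ℚ) (L :: rs) ↔
      IsRegular (MvPolynomial (Fin n) ℚ) (rs.map (evalFirst t)) :=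
  isRegular_cons_iff_of_associated_X_sub_C (finSuccEquiv ℚ n).toRingEquiv t hL rs

lemma associated_finSuccEquiv_smul_xq_one {c : ℚ} (hc : c ≠ 0) :
    Associated (finSuccEquiv ℚ n (c • xq (n + 1) 1)) (Polynomial.X - Polynomial.C 0) := by
  rw [map_smul, finSuccEquiv_xq_one, map_zero, sub_zero, Algebra.smul_def]
  exact associated_unit_mul_left _ _ (hc.isUnit.map _)

lemma finSuccEquiv_xq_one_sub_xq_succ {p : ℕ} (hp : 1 ≤ p) :
    finSuccEquiv ℚ n (xq (n + 1) 1 - xq (n + 1) (p + 1)) =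
      Polynomial.X - Polynomial.C (xq n p) := by
  rw [map_sub, finSuccEquiv_xq_one, finSuccEquiv_xq_succ hp]

theorem isRegular_fcheckWeighted (n : ℕ) (w : ℕ → ℚ) (H : ℕ → ℕ) (hw : ∀ k, 0 < w k)
    (hH : ∀ j, 1 ≤ j → j ≤ n → j ≤ H j) (hmono : MonotoneOn H (Set.Icc 1 n)) :
    IsRegular (MvPolynomial (Fin n) ℚ)
      ((List.range n).map fun j => fcheckWeighted (xq n) w (H (j + 1)) (j + 1)) := by
  induction n generalizing w H with
  | zero => exact IsRegular.nil _ _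
  | succ n ih =>
    have hH' (j : ℕ) (hj : 1 ≤ j) (hjn : j ≤ n) : j ≤ H (j + 1) - 1 := by
      have := hH (j + 1) (by omega) (by omega)
      omega
    have hmono' : MonotoneOn (fun i => H (i + 1) - 1) (Set.Icc 1 n) :=
      fun a ha b hb hab => Nat.sub_le_sub_right
        (hmono ⟨by omega, Nat.succ_le_succ ha.2⟩ ⟨by omega, Nat.succ_le_succ hb.2⟩ (by omega)) 1
    have quotient (t : MvPolynomial (Fin n) ℚ) (w' : ℕ → ℚ) (hw' : ∀ k, 0 < w' k)
        (ht : ∀ j < n, ∀ i, H (j + 2) = i + 1 →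
          evalFirst t (fcheckWeighted (xq (n + 1)) w (i + 1) (j + 2)) =
            fcheckWeighted (xq n) w' i (j + 1)) :
        IsRegular (MvPolynomial (Fin n) ℚ) (((List.range n).map fun j =>
          fcheckWeighted (xq (n + 1)) w (H (j + 2)) (j + 2)).map (evalFirst t)) := by
      rw [List.map_map]
      refine (List.map_congr_left fun j hj => ?_).symm ▸ ih w' _ hw' hH' hmono'
      rw [List.mem_range] at hj
      have hi : H (j + 2) = H (j + 2) - 1 + 1 := by
        have := hH (j + 2) (by omega) (by omega)
        omega
      rw [comp_apply, hi, ht j hj _ hi, Nat.add_sub_cancel]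
    rw [List.range_succ_eq_map, List.map_cons, List.map_map, zero_add, fcheckWeighted_one]
    refine IsRegular.mul_prod_cons ?_ fun m hm => ?_
    · rw [isRegular_cons_iff_evalFirst (associated_finSuccEquiv_smul_xq_one (hw 1).ne')]
      exact quotient 0 _ (fun k => hw (k + 1)) fun j _ i _ => evalFirst_zero_fcheckWeighted w i _
    · rw [mem_Icc] at hm
      obtain ⟨p, rfl⟩ : ∃ p, m = p + 1 := ⟨m - 1, by omega⟩
      have hp : 1 ≤ p := by omega
      rw [isRegular_cons_iff_evalFirst (.of_eq (finSuccEquiv_xq_one_sub_xq_succ hp))]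
      have hw' (k : ℕ) : 0 < ((fun k => w (k + 1)) + Pi.single p (w 1) : ℕ → ℚ) k := by
        have := hw (k + 1)
        have := hw 1
        simp only [Pi.add_apply, Pi.single_apply]
        split_ifs <;> linarith
      refine quotient _ _ hw' fun j hj i hi => evalFirst_xq_fcheckWeighted hp ?_ w _
      have := hmono ⟨le_rfl, by omega⟩ ⟨by omega, by omega⟩ (by omega : 1 ≤ j + 2)
      omega

end Polynomial

/-- For any Hessenberg function `h`, the polynomials `f̌_{h(1),1}, …, f̌_{h(n),n}` form a
regular sequence in `ℚ[x_1,…,x_n]`. -/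
theorem stmt16 (n : ℕ) (h : ℕ → ℕ)
    (hH1 : ∀ j : ℕ, 1 ≤ j → j ≤ n → j ≤ h j ∧ h j ≤ n)
    (hH2 : ∀ j : ℕ, 1 ≤ j → j < n → h j ≤ h (j + 1)) :
    RingTheory.Sequence.IsRegular (MvPolynomial (Fin n) ℚ)
      ((List.range n).map (fun j => fcheck n (h (j + 1)) (j + 1))) := by
  have hmono : MonotoneOn h (Set.Icc 1 n) := monotoneOn_of_le_add_one Set.ordConnected_Icc
    fun j _ hj hj1 => hH2 j hj.1 (by have := hj1.2; omega)
  simpa only [fcheck_eq_fcheckWeighted] using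
    isRegular_fcheckWeighted n 1 h (fun _ => one_pos) (fun j hj hjn => (hH1 j hj hjn).1) hmono
end
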